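/- Under the uniform bound ∫_{t_p}^{t_{p+1}} Σ_{j≠k} a_{kj}(t) dt ≤ nM, the diagonal entries of the sampled transition matrix satisfy φ_{kk}(p) ≥ e^{−nM} for every agent k and every p. -/

import Mathlib

/-!
Let `x` solve the flow from the unit vector `e_k`, so that `x_k(t_{p+1}) = φ_{kk}`. The flow
preserves nonnegativity: if `c > 0` were the largest value of `-x_i(t)`, Grönwall applied to
`x_i + c ≥ 0`, whose derivative is at least `-(∑ⱼ aᵢⱼ)(x_i + c)`, would keep it positive up to the
time where it vanishes. With `x ≥ 0`, `ẋ_k ≥ -(∑_{j≠k} a_{kj}) x_k`, and Grönwall gives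
`φ_{kk} = x_k(t_{p+1}) ≥ exp (-∫ ∑_{j≠k} a_{kj}) ≥ e^{-nM}`. Since the weights are only
integrable, Grönwall is proved for absolutely continuous functions, through the product rule
for `x · exp (∫ β)`.
-/

open MeasureTheory Set Real NNReal intervalIntegral

theorem LipschitzOnWith.comp_absolutelyContinuousOnInterval {X Y : Type*}
    [PseudoMetricSpace X] [PseudoMetricSpace Y] {g : X → Y} {K : ℝ≥0} {s : Set X}
    (hg : LipschitzOnWith K g s) {f : ℝ → X} {a b : ℝ}
    (hf : AbsolutelyContinuousOnInterval f a b) (hfs : MapsTo f (uIcc a b) s) :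
    AbsolutelyContinuousOnInterval (g ∘ f) a b := by
  rw [absolutelyContinuousOnInterval_iff] at hf ⊢
  intro ε hε
  obtain ⟨δ, hδ, hfδ⟩ := hf (ε / (K + 1)) (by positivity)
  refine ⟨δ, hδ, fun (n, I) hnI hsum ↦ ?_⟩
  calc ∑ i ∈ Finset.range n, dist (g (f (I i).1)) (g (f (I i).2))
      ≤ ∑ i ∈ Finset.range n, K * dist (f (I i).1) (f (I i).2) :=
        Finset.sum_le_sum fun i hi ↦ hg.dist_le_mul _ (hfs (hnI.1 i hi).1) _ (hfs (hnI.1 i hi).2)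
    _ = K * ∑ i ∈ Finset.range n, dist (f (I i).1) (f (I i).2) := (Finset.mul_sum ..).symm
    _ ≤ K * (ε / (K + 1)) := by gcongr; exact (hfδ (n, I) hnI hsum).le
    _ < (K + 1) * (ε / (K + 1)) := by gcongr; linarith
    _ = ε := by field_simp

theorem AbsolutelyContinuousOnInterval.exp {f : ℝ → ℝ} {a b : ℝ}
    (hf : AbsolutelyContinuousOnInterval f a b) :
    AbsolutelyContinuousOnInterval (fun x ↦ Real.exp (f x)) a b := by
  obtain ⟨C, hC⟩ := hf.exists_bound
  obtain ⟨K, hK⟩ := contDiff_exp.contDiffOn.exists_lipschitzOnWith (n := 1) one_ne_zero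
    (convex_Icc (-C) C) isCompact_Icc
  exact hK.comp_absolutelyContinuousOnInterval hf fun x hx ↦ abs_le.1 (hC x hx)

theorem mul_exp_neg_integral_le_of_forall_neg_mul_le {a b : ℝ} (hab : a ≤ b) {u g β : ℝ → ℝ}
    (hg : IntervalIntegrable g volume a b) (hβ : IntervalIntegrable β volume a b)
    (hu : ∀ t ∈ Icc a b, u t = u a + ∫ s in a..t, g s)
    (hgu : ∀ s ∈ Icc a b, -(β s * u s) ≤ g s) :
    u a * exp (-∫ s in a..b, β s) ≤ u b := by
  set U : ℝ → ℝ := fun t ↦ u a + ∫ s in a..t, g s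
  set E : ℝ → ℝ := fun t ↦ exp (∫ s in a..t, β s)
  have hU : AbsolutelyContinuousOnInterval U a b :=
    (LipschitzWith.const (u a)).lipschitzOnWith.absolutelyContinuousOnInterval.add
      (hg.absolutelyContinuousOnInterval_intervalIntegral left_mem_uIcc)
  have hE : AbsolutelyContinuousOnInterval E a b :=
    (hβ.absolutelyContinuousOnInterval_intervalIntegral left_mem_uIcc).exp
  -- `U * E` has a.e. derivative `E * (g + β u) ≥ 0`.
  have hmono : 0 ≤ ∫ t in a..b, deriv U t * E t + U t * deriv E t := by
    refine integral_nonneg_of_ae_restrict hab ?_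
    rw [Filter.EventuallyLE, ae_restrict_iff' measurableSet_Icc]
    filter_upwards [hg.ae_hasDerivAt_integral, hβ.ae_hasDerivAt_integral] with t hgt hβt ht
    have ht' : t ∈ uIcc a b := uIcc_of_le hab ▸ ht
    rw [Pi.zero_apply, ((hgt ht' a left_mem_uIcc).const_add (u a)).deriv,
      (hβt ht' a left_mem_uIcc).exp.deriv, show U t = u t from (hu t ht).symm]
    nlinarith [hgu t ht, exp_pos (∫ s in a..t, β s)]
  rw [hU.integral_deriv_mul_eq_sub hE] at hmono
  simp only [U, E, integral_same, add_zero, exp_zero, mul_one] at hmono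
  rw [← hu b ⟨hab, le_rfl⟩] at hmono
  rw [exp_neg, ← div_eq_mul_inv, div_le_iff₀ (exp_pos _)]
  linarith

theorem intervalIntegrable_finset_sum_apply {ι : Type*} {f : ι → ℝ → ℝ} {a b : ℝ}
    (s : Finset ι) (hf : ∀ i, IntervalIntegrable (f i) volume a b) :
    IntervalIntegrable (fun t ↦ ∑ i ∈ s, f i t) volume a b :=
  Finset.sum_fn s f ▸ IntervalIntegrable.sum s fun i _ ↦ hf i

section ConsensusFlow

variable {ι : Type*} [Fintype ι] {a : ι → ι → ℝ → ℝ} {t₀ t₁ : ℝ} {x : ι → ℝ → ℝ}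

/-- Integral form of `ẋᵢ = ∑ⱼ aᵢⱼ (xⱼ - xᵢ)`, meaningful for merely integrable weights. -/
def IsConsensusFlow (a : ι → ι → ℝ → ℝ) (t₀ t₁ : ℝ) (x : ι → ℝ → ℝ) : Prop :=
  ∀ i, ∀ τ ∈ Icc t₀ t₁, x i τ = x i t₀ + ∫ s in t₀..τ, ∑ j, a i j s * (x j s - x i s)

theorem intervalIntegrable_consensus_field (ha : ∀ i j, IntervalIntegrable (a i j) volume t₀ t₁)
    (hx : ∀ i, Continuous (x i)) (i : ι) :
    IntervalIntegrable (fun s ↦ ∑ j, a i j s * (x j s - x i s)) volume t₀ t₁ :=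
  intervalIntegrable_finset_sum_apply _ fun j ↦
    (ha i j).mul_continuousOn ((hx j).sub (hx i)).continuousOn

theorem IsConsensusFlow.nonneg (hflow : IsConsensusFlow a t₀ t₁ x) (ha₀ : ∀ i j t, 0 ≤ a i j t)
    (ha : ∀ i j, IntervalIntegrable (a i j) volume t₀ t₁) (hx : ∀ i, Continuous (x i))
    (hx₀ : ∀ i, 0 ≤ x i t₀) : ∀ i, ∀ τ ∈ Icc t₀ t₁, 0 ≤ x i τ := by
  intro i₀ τ₀ hτ₀
  have : Nonempty ι := ⟨i₀⟩
  choose σ hσ hσmax using fun i ↦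
    isCompact_Icc.exists_isMaxOn ⟨τ₀, hτ₀⟩ (hx i).neg.continuousOn
  obtain ⟨k, hk⟩ := Finite.exists_max fun i ↦ -x i (σ i)
  set c := -x k (σ k)
  have hc : ∀ i, ∀ τ ∈ Icc t₀ t₁, -x i τ ≤ c := fun i τ hτ ↦ (hσmax i hτ).trans (hk i)
  -- Grönwall for `x k + c ≥ 0` up to the time where `x k = -c` forces `c * exp (-…) ≤ 0`.
  suffices c ≤ 0 by linarith [hc i₀ τ₀ hτ₀]
  have hsub : uIcc t₀ (σ k) ⊆ uIcc t₀ t₁ := by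
    rw [uIcc_of_le (hσ k).1, uIcc_of_le ((hσ k).1.trans (hσ k).2)]
    exact Icc_subset_Icc le_rfl (hσ k).2
  have hIcc : Icc t₀ (σ k) ⊆ Icc t₀ t₁ := Icc_subset_Icc le_rfl (hσ k).2
  have hgron := mul_exp_neg_integral_le_of_forall_neg_mul_le (hσ k).1 (u := fun t ↦ x k t + c)
    ((intervalIntegrable_consensus_field ha hx k).mono_set hsub)
    ((intervalIntegrable_finset_sum_apply Finset.univ (ha k)).mono_set hsub)
    (fun t ht ↦ by rw [hflow k t (hIcc ht)]; ring)
    (fun s hs ↦ by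
      calc -((∑ j, a k j s) * (x k s + c)) = ∑ j, a k j s * (-c - x k s) := by
            rw [Finset.sum_mul, ← Finset.sum_neg_distrib]
            exact Finset.sum_congr rfl fun j _ ↦ by ring
        _ ≤ ∑ j, a k j s * (x j s - x k s) := Finset.sum_le_sum fun j _ ↦
            mul_le_mul_of_nonneg_left (by linarith [hc j s (hIcc hs)]) (ha₀ k j s))
  simp only [c, add_neg_cancel] at hgron
  nlinarith [hx₀ k, exp_pos (-∫ s in t₀..σ k, ∑ j, a k j s)]

theorem IsConsensusFlow.mul_exp_neg_integral_le [DecidableEq ι]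
    (hflow : IsConsensusFlow a t₀ t₁ x) (ha₀ : ∀ i j t, 0 ≤ a i j t)
    (ha : ∀ i j, IntervalIntegrable (a i j) volume t₀ t₁) (hx : ∀ i, Continuous (x i))
    (ht : t₀ ≤ t₁) (hx₀ : ∀ i, 0 ≤ x i t₀) (k : ι) :
    x k t₀ * exp (-∫ s in t₀..t₁, ∑ j ∈ Finset.univ.erase k, a k j s) ≤ x k t₁ := by
  refine mul_exp_neg_integral_le_of_forall_neg_mul_le ht
    (intervalIntegrable_consensus_field ha hx k)
    (intervalIntegrable_finset_sum_apply _ (ha k)) (hflow k) fun s hs ↦ ?_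
  calc -((∑ j ∈ Finset.univ.erase k, a k j s) * x k s)
      = ∑ j ∈ Finset.univ.erase k, a k j s * (0 - x k s) := by
        rw [Finset.sum_mul, ← Finset.sum_neg_distrib]
        exact Finset.sum_congr rfl fun j _ ↦ by ring
    _ ≤ ∑ j ∈ Finset.univ.erase k, a k j s * (x j s - x k s) := Finset.sum_le_sum fun j _ ↦
        mul_le_mul_of_nonneg_left (by linarith [hflow.nonneg ha₀ ha hx hx₀ j s hs]) (ha₀ k j s)
    _ = ∑ j, a k j s * (x j s - x k s) := Finset.sum_erase _ (by rw [sub_self, mul_zero])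

end ConsensusFlow

theorem sampled_diagonal_lower_bound_general
    (n : ℕ) (M tp tp1 : ℝ) (htp : tp ≤ tp1)
    (a : Fin n → Fin n → ℝ → ℝ)
    (ha_nonneg : ∀ i j t, 0 ≤ a i j t)
    (ha_int : ∀ i j, IntervalIntegrable (a i j) MeasureTheory.volume tp tp1)
    (φ : Matrix (Fin n) (Fin n) ℝ)
    -- φ is the fundamental matrix of the flow over [tp, tp1]
    (hφ : ∀ x : Fin n → ℝ → ℝ, (∀ i, Continuous (x i)) →
      (∀ i τ, τ ∈ Set.Icc tp tp1 →
        x i τ = x i tp + ∫ s in tp..τ, ∑ j, a i j s * (x j s - x i s)) →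
      (fun i => x i tp1) = φ.mulVec (fun i => x i tp))
    (hexists : ∀ v : Fin n → ℝ, ∃ x : Fin n → ℝ → ℝ,
      (∀ i, Continuous (x i)) ∧ (∀ i, x i tp = v i) ∧
      (∀ i τ, τ ∈ Set.Icc tp tp1 →
        x i τ = x i tp + ∫ s in tp..τ, ∑ j, a i j s * (x j s - x i s)))
    (hbound : ∀ k, (∫ t in tp..tp1, ∑ j ∈ Finset.univ.erase k, a k j t) ≤ n * M) :
    ∀ k, Real.exp (-(n * M)) ≤ φ k k := by
  intro k
  obtain ⟨x, hx, hx₀, hflow⟩ := hexists (Pi.single k 1)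
  have hφkk : x k tp1 = φ k k := by simpa [hx₀] using congrFun (hφ x hx hflow) k
  have hx₀_nonneg : ∀ i, 0 ≤ x i tp := fun i ↦ by
    rw [hx₀]; exact Pi.single_nonneg (α := fun _ ↦ ℝ) |>.2 zero_le_one i
  calc exp (-(n * M)) ≤ exp (-∫ t in tp..tp1, ∑ j ∈ Finset.univ.erase k, a k j t) :=
        exp_le_exp.2 (neg_le_neg (hbound k))
    _ = x k tp * exp (-∫ t in tp..tp1, ∑ j ∈ Finset.univ.erase k, a k j t) := by
        rw [hx₀, Pi.single_eq_same, one_mul]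
    _ ≤ x k tp1 := IsConsensusFlow.mul_exp_neg_integral_le hflow ha_nonneg ha_int hx htp hx₀_nonneg k
    _ = φ k k := hφkk

/-- Under the uniform bound `∫ Σ_{j≠k} a_kj ≤ nM`, the diagonal
entries of the sampled transition matrix of the consensus flow over
`[t_p, t_{p+1}]` satisfy `φ_kk ≥ e^{-nM}`. -/
theorem sampled_diagonal_lower_bound
    (n : ℕ) (M tp tp1 : ℝ) (hM : 0 < M) (htp : tp ≤ tp1)
    (a : Fin n → Fin n → ℝ → ℝ)
    (ha_nonneg : ∀ i j t, 0 ≤ a i j t)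
    (ha_int : ∀ i j, IntervalIntegrable (a i j) MeasureTheory.volume tp tp1)
    (φ : Matrix (Fin n) (Fin n) ℝ)
    -- φ is the fundamental matrix of the flow over [tp, tp1]
    (hφ : ∀ x : Fin n → ℝ → ℝ, (∀ i, Continuous (x i)) →
      (∀ i τ, τ ∈ Set.Icc tp tp1 →
        x i τ = x i tp + ∫ s in tp..τ, ∑ j, a i j s * (x j s - x i s)) →
      (fun i => x i tp1) = φ.mulVec (fun i => x i tp))
    (hexists : ∀ v : Fin n → ℝ, ∃ x : Fin n → ℝ → ℝ,
      (∀ i, Continuous (x i)) ∧ (∀ i, x i tp = v i) ∧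
      (∀ i τ, τ ∈ Set.Icc tp tp1 →
        x i τ = x i tp + ∫ s in tp..τ, ∑ j, a i j s * (x j s - x i s)))
    (hbound : ∀ k, (∫ t in tp..tp1, ∑ j ∈ Finset.univ.erase k, a k j t) ≤ n * M) :
    ∀ k, Real.exp (-(n * M)) ≤ φ k k :=
  sampled_diagonal_lower_bound_general n M tp tp1 htp a ha_nonneg ha_int φ hφ hexists hbound
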